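/- Let A(ξ) = ξ₁⁴ + 2β ξ₁²ξ₂² + ξ₂⁴ with 0 < β < 3 (strongly convex case). Fix x ∈ ℝ² \ {0} and suppose q ∈ ℝ² satisfies (1/4)∇A(q) = x. Then A(q) = p₊(x)^{4/3}, where p₊(x) = sup_{ξ≠0} (x·ξ)/A(ξ)^{1/4}. -/

import Mathlib

/-!
By Euler's identity `x · q = A(q)` when `x = (1/4)∇A(q)`, so `ξ = q` gives the value `A(q)^{3/4}`
in the supremum defining `p₊(x)`. Conversely, convexity of `A` (which is where `β ≤ 3` enters)
gives `4 x · η ≤ A(η) + 3 A(q)` for every `η`; applied to the multiple `η` of `ξ` with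
`A(η) = A(q)` this yields `x · ξ ≤ A(q)^{3/4} A(ξ)^{1/4}`. Hence `p₊(x) = A(q)^{3/4}`.
-/

/-- The quartic symbol `A(ξ) = ξ₁⁴ + 2β ξ₁²ξ₂² + ξ₂⁴`. -/
noncomputable def symbA (β : ℝ) (ξ : ℝ × ℝ) : ℝ :=
  ξ.1 ^ 4 + 2 * β * ξ.1 ^ 2 * ξ.2 ^ 2 + ξ.2 ^ 4

/-- The dual Finsler metric `p₊(x) = sup_{ξ ≠ 0} (x·ξ)/A(ξ)^{1/4}`. -/
noncomputable def pstar (β : ℝ) (x : ℝ × ℝ) : ℝ :=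
  sSup {r : ℝ | ∃ ξ : ℝ × ℝ, ξ ≠ 0 ∧
    r = (x.1 * ξ.1 + x.2 * ξ.2) / (symbA β ξ) ^ ((1 : ℝ) / 4)}

/-- `(1/4)∇A(q)`. -/
def quarterGradA (β : ℝ) (q : ℝ × ℝ) : ℝ × ℝ :=
  (q.1 ^ 3 + β * q.1 * q.2 ^ 2, β * q.1 ^ 2 * q.2 + q.2 ^ 3)

theorem rpow_one_div_four_pow {a : ℝ} (ha : 0 ≤ a) : (a ^ ((1 : ℝ) / 4)) ^ 4 = a := by
  rw [one_div]
  exact_mod_cast Real.rpow_inv_natCast_pow ha (by norm_num : 4 ≠ 0)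

section

variable {β : ℝ}

theorem symbA_pos (hβ : 0 ≤ β) {ξ : ℝ × ℝ} (hξ : ξ ≠ 0) : 0 < symbA β ξ := by
  unfold symbA
  rcases ne_or_eq ξ.1 0 with h | h
  · positivity
  · have : ξ.2 ≠ 0 := fun h2 ↦ hξ (Prod.ext h h2)
    positivity

theorem symbA_smul (t : ℝ) (ξ : ℝ × ℝ) : symbA β (t • ξ) = t ^ 4 * symbA β ξ := by
  simp only [symbA, Prod.smul_fst, Prod.smul_snd, smul_eq_mul]
  ring

/-- Euler's identity for the `4`-homogeneous `A`. -/
theorem quarterGradA_dot_self (q : ℝ × ℝ) :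
    (quarterGradA β q).1 * q.1 + (quarterGradA β q).2 * q.2 = symbA β q := by
  simp only [quarterGradA, symbA]
  ring

/-- The tangent-plane inequality `A(η) ≥ A(q) + ∇A(q)·(η - q)` for the quartic, which is convex
exactly when `0 ≤ β ≤ 3`; the certificate is a sum of squares weighted by `β` and `3 - β`. -/
theorem four_mul_quarterGradA_dot_le (hβ0 : 0 ≤ β) (hβ3 : β ≤ 3) (q η : ℝ × ℝ) :
    4 * ((quarterGradA β q).1 * η.1 + (quarterGradA β q).2 * η.2) ≤
      symbA β η + 3 * symbA β q := by
  obtain ⟨q1, q2⟩ := q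
  obtain ⟨e1, e2⟩ := η
  have h3 : 0 ≤ 3 - β := by linarith
  simp only [quarterGradA, symbA]
  nlinarith [mul_nonneg hβ0 (sq_nonneg (e1 * e2 - q1 * q2)),
    mul_nonneg hβ0 (sq_nonneg (q2 * e1 + q1 * e2 - 2 * q1 * q2)),
    mul_nonneg hβ0 (sq_nonneg (e1 ^ 2 + e2 ^ 2 - q1 ^ 2 - q2 ^ 2)),
    mul_nonneg hβ0 (sq_nonneg (q1 * e1 + q2 * e2 - q1 ^ 2 - q2 ^ 2)),
    mul_nonneg h3 (sq_nonneg (e1 ^ 2 - q1 ^ 2)), mul_nonneg h3 (sq_nonneg (q1 * (e1 - q1))),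
    mul_nonneg h3 (sq_nonneg (e2 ^ 2 - q2 ^ 2)), mul_nonneg h3 (sq_nonneg (q2 * (e2 - q2)))]

/-- Rescale `ξ` onto the level set `{A = A(q)}` and apply the tangent-plane inequality there. -/
theorem quarterGradA_dot_le (hβ0 : 0 ≤ β) (hβ3 : β ≤ 3) {q ξ : ℝ × ℝ} {s r : ℝ}
    (hs : 0 < s) (hr : 0 < r) (hq : symbA β q = s ^ 4) (hξ : symbA β ξ = r ^ 4) :
    (quarterGradA β q).1 * ξ.1 + (quarterGradA β q).2 * ξ.2 ≤ s ^ 3 * r := by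
  set d := (quarterGradA β q).1 * ξ.1 + (quarterGradA β q).2 * ξ.2
  have key := four_mul_quarterGradA_dot_le hβ0 hβ3 q ((s / r) • ξ)
  rw [symbA_smul, hq, hξ, div_pow, div_mul_cancel₀ _ (by positivity)] at key
  simp only [Prod.smul_fst, Prod.smul_snd, smul_eq_mul] at key
  have h : s / r * d ≤ s ^ 4 := by linear_combination key / 4
  rw [div_mul_eq_mul_div, div_le_iff₀ hr] at h
  exact le_of_mul_le_mul_left (by linear_combination h) hs

theorem isGreatest_quarterGradA (hβ0 : 0 ≤ β) (hβ3 : β ≤ 3) {q : ℝ × ℝ} (hq : q ≠ 0) :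
    IsGreatest {r : ℝ | ∃ ξ : ℝ × ℝ, ξ ≠ 0 ∧ r = ((quarterGradA β q).1 * ξ.1 +
      (quarterGradA β q).2 * ξ.2) / (symbA β ξ) ^ ((1 : ℝ) / 4)} (symbA β q ^ ((3 : ℝ) / 4)) := by
  have ha := symbA_pos hβ0 hq
  set s := symbA β q ^ ((1 : ℝ) / 4)
  have hs : 0 < s := by positivity
  have hs4 : symbA β q = s ^ 4 := (rpow_one_div_four_pow ha.le).symm
  have hs3 : symbA β q ^ ((3 : ℝ) / 4) = s ^ 3 := by
    rw [← Real.rpow_natCast, ← Real.rpow_mul ha.le]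
    norm_num
  rw [hs3]
  refine ⟨⟨q, hq, ?_⟩, ?_⟩
  · rw [quarterGradA_dot_self]
    change s ^ 3 = symbA β q / s
    rw [hs4]
    field_simp
  · rintro _ ⟨ξ, hξ, rfl⟩
    have hA := symbA_pos hβ0 hξ
    have hr : 0 < symbA β ξ ^ ((1 : ℝ) / 4) := by positivity
    rw [div_le_iff₀ hr]
    exact quarterGradA_dot_le hβ0 hβ3 hs hr hs4 (rpow_one_div_four_pow hA.le).symm

theorem pstar_quarterGradA (hβ0 : 0 ≤ β) (hβ3 : β ≤ 3) {q : ℝ × ℝ} (hq : q ≠ 0) :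
    pstar β (quarterGradA β q) = symbA β q ^ ((3 : ℝ) / 4) :=
  (isGreatest_quarterGradA hβ0 hβ3 hq).csSup_eq

end

/-- in the strongly convex case `0 < β < 3`, if `x ≠ 0` and
`(1/4)∇A(q) = x`, then `A(q) = p₊(x)^{4/3}`. -/
theorem stmt14 (β : ℝ) (hβ1 : 0 < β) (hβ2 : β < 3)
    (x q : ℝ × ℝ) (hx : x ≠ 0)
    (hq1 : q.1 ^ 3 + β * q.1 * q.2 ^ 2 = x.1)
    (hq2 : β * q.1 ^ 2 * q.2 + q.2 ^ 3 = x.2) :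
    symbA β q = (pstar β x) ^ ((4 : ℝ) / 3) := by
  obtain rfl : x = quarterGradA β q := Prod.ext hq1.symm hq2.symm
  have hq : q ≠ 0 := by rintro rfl; simp [quarterGradA] at hx
  rw [pstar_quarterGradA hβ1.le hβ2.le hq, ← Real.rpow_mul (symbA_pos hβ1.le hq).le]
  norm_num
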